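/- Let u, v be linearly independent unit vectors in ℝ² and let f = (f₁, f₂) be a vector field on ℝ² with f₁, f₂ ∈ C²_c(ℝ²) such that curl f(x) = 0 for all x ∈ ℝ². If T f(x) = 0 for all x ∈ ℝ², then f = 0 identically. That is, the transverse V-line transform is injective on compactly supported curl-free vector fields. -/

import Mathlib

open MeasureTheory Matrix

noncomputable section

/-- Dot product on ℝ². -/
def dot2 (u v : ℝ × ℝ) : ℝ := u.1 * v.1 + u.2 * v.2

/-- `x^⊥ = (-x₂, x₁)`. -/
def perp2 (x : ℝ × ℝ) : ℝ × ℝ := (-x.2, x.1)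

/-- Divergent beam transform `X_u h (x) = ∫₀^∞ h(x + t u) dt`. -/
def Xbeam (u : ℝ × ℝ) (h : ℝ × ℝ → ℝ) (x : ℝ × ℝ) : ℝ :=
  ∫ t in Set.Ioi (0 : ℝ), h (x + t • u)

/-- First moment divergent beam transform `X¹_u h (x) = ∫₀^∞ t h(x + t u) dt`. -/
def Xmom (u : ℝ × ℝ) (h : ℝ × ℝ → ℝ) (x : ℝ × ℝ) : ℝ :=
  ∫ t in Set.Ioi (0 : ℝ), t * h (x + t • u)

/-- Directional derivative `D_u h = u · ∇ h`. -/
def Ddir (u : ℝ × ℝ) (h : ℝ × ℝ → ℝ) (x : ℝ × ℝ) : ℝ := fderiv ℝ h x u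

/-- Twice continuously differentiable, compactly supported. -/
def IsC2c (h : ℝ × ℝ → ℝ) : Prop := ContDiff ℝ 2 h ∧ HasCompactSupport h

/-- `div f = ∂f₁/∂x₁ + ∂f₂/∂x₂`. -/
def divf (f₁ f₂ : ℝ × ℝ → ℝ) (x : ℝ × ℝ) : ℝ :=
  fderiv ℝ f₁ x (1, 0) + fderiv ℝ f₂ x (0, 1)

/-- `curl f = ∂f₂/∂x₁ - ∂f₁/∂x₂`. -/
def curlf (f₁ f₂ : ℝ × ℝ → ℝ) (x : ℝ × ℝ) : ℝ :=
  fderiv ℝ f₂ x (1, 0) - fderiv ℝ f₁ x (0, 1)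

/-- Longitudinal V-line transform `L f = -X_u (f·u) + X_v (f·v)`. -/
def VlineL (u v : ℝ × ℝ) (f₁ f₂ : ℝ × ℝ → ℝ) (x : ℝ × ℝ) : ℝ :=
  - Xbeam u (fun y => f₁ y * u.1 + f₂ y * u.2) x
  + Xbeam v (fun y => f₁ y * v.1 + f₂ y * v.2) x

/-- Transverse V-line transform `T f = -X_u (f·u^⊥) + X_v (f·v^⊥)`. -/
def VlineT (u v : ℝ × ℝ) (f₁ f₂ : ℝ × ℝ → ℝ) (x : ℝ × ℝ) : ℝ :=
  - Xbeam u (fun y => f₁ y * (perp2 u).1 + f₂ y * (perp2 u).2) x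
  + Xbeam v (fun y => f₁ y * (perp2 v).1 + f₂ y * (perp2 v).2) x

/-- First moment longitudinal V-line transform `I f = -X¹_u (f·u) + X¹_v (f·v)`. -/
def VmomL (u v : ℝ × ℝ) (f₁ f₂ : ℝ × ℝ → ℝ) (x : ℝ × ℝ) : ℝ :=
  - Xmom u (fun y => f₁ y * u.1 + f₂ y * u.2) x
  + Xmom v (fun y => f₁ y * v.1 + f₂ y * v.2) x

/-- First moment transverse V-line transform `J f = -X¹_u (f·u^⊥) + X¹_v (f·v^⊥)`. -/
def VmomT (u v : ℝ × ℝ) (f₁ f₂ : ℝ × ℝ → ℝ) (x : ℝ × ℝ) : ℝ :=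
  - Xmom u (fun y => f₁ y * (perp2 u).1 + f₂ y * (perp2 u).2) x
  + Xmom v (fun y => f₁ y * (perp2 v).1 + f₂ y * (perp2 v).2) x

/-- Radon transform `R h (ψ, s) = ∫_ℝ h (s ψ + t ψ^⊥) dt`. -/
def Radon2 (h : ℝ × ℝ → ℝ) (ψ : ℝ × ℝ) (s : ℝ) : ℝ :=
  ∫ t : ℝ, h (s • ψ + t • perp2 ψ)

/-- The (vector-valued) star transform. -/
def starS (m : ℕ) (γ : Fin m → ℝ × ℝ) (c : Fin m → ℝ)
    (f₁ f₂ : ℝ × ℝ → ℝ) (x : ℝ × ℝ) : ℝ × ℝ :=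
  ∑ i, c i •
    (Xbeam (γ i) (fun y => f₁ y * (γ i).1 + f₂ y * (γ i).2) x,
     Xbeam (γ i) (fun y => f₁ y * (perp2 (γ i)).1 + f₂ y * (perp2 (γ i)).2) x)

/-- `γ(ψ) = -∑ cᵢ γᵢ / (ψ·γᵢ)`. -/
def starGamma (m : ℕ) (γ : Fin m → ℝ × ℝ) (c : Fin m → ℝ) (ψ : ℝ × ℝ) : ℝ × ℝ :=
  - ∑ i, (c i / dot2 ψ (γ i)) • γ i

/-- A star configuration is symmetric if `m = 2k` and, after re-indexing by a
permutation, `γᵢ = -γ_{k+i}` and `cᵢ = -c_{k+i}` for `i = 1, …, k`. -/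
def StarSymmetric (m : ℕ) (γ : Fin m → ℝ × ℝ) (c : Fin m → ℝ) : Prop :=
  ∃ k : ℕ, ∃ hk : m = 2 * k, ∃ σ : Equiv.Perm (Fin m),
    ∀ i : Fin m, ∀ hi : (i : ℕ) < k,
      γ (σ i) = - γ (σ ⟨(i : ℕ) + k, by omega⟩) ∧
      c (σ i) = - c (σ ⟨(i : ℕ) + k, by omega⟩)

/-! Put `a = f·u^⊥` and `b = f·v^⊥`, so that `T f = 0` reads `X_u a = X_v b`. Derivatives
commute with `X_u`, and `D_u X_u h = -h` by the fundamental theorem of calculus along rays.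
Differentiating `X_u a = X_v b` along `v` gives `X_u (D_v a) = -b`, and then along `u` gives
`D_v a = D_u b`, which expands to `det(u, v) · div f = 0`. Hence `f` is divergence- and curl-free,
so `f₁ - i f₂` satisfies the Cauchy–Riemann equations; an entire function with compact support
vanishes by Liouville's theorem. -/

open Set Filter Topology Metric Pointwise

section Ray

variable {V E : Type*} [NormedAddCommGroup V] [NormedSpace ℝ V] [NormedAddCommGroup E]

lemma HasCompactSupport.comp_add_smul {G : V → E} (hG : HasCompactSupport G) {u : V}
    (hu : u ≠ 0) (x : V) : HasCompactSupport fun t : ℝ => G (x + t • u) :=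
  hG.comp_isClosedEmbedding ((Homeomorph.addLeft x).isClosedEmbedding.comp
    (isClosedEmbedding_smul_left hu))

lemma integrableOn_Ioi_comp_add_smul {G : V → E} (hc : Continuous G) (hs : HasCompactSupport G)
    {u : V} (hu : u ≠ 0) (x : V) : IntegrableOn (fun t : ℝ => G (x + t • u)) (Ioi 0) :=
  ((hc.comp (by fun_prop)).integrable_of_hasCompactSupport (hs.comp_add_smul hu x)).integrableOn

end Ray

section BeamTransform

variable {u : ℝ × ℝ} {h : ℝ × ℝ → ℝ}

lemma hasFDerivAt_Xbeam (hu : u ≠ 0) (hc : ContDiff ℝ 1 h) (hs : HasCompactSupport h)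
    (x₀ : ℝ × ℝ) :
    HasFDerivAt (Xbeam u h) (∫ t in Ioi (0 : ℝ), fderiv ℝ h (x₀ + t • u)) x₀ := by
  have hdiff : Differentiable ℝ h := hc.differentiable one_ne_zero
  have hfderiv : Continuous (fderiv ℝ h) := hc.continuous_fderiv one_ne_zero
  obtain ⟨C, hC⟩ := hs.fderiv (𝕜 := ℝ) |>.exists_bound_of_continuous hfderiv
  -- the parameters `t` for which some ray from `closedBall x₀ 1` meets `tsupport h`
  set S : Set ℝ := (· • u) ⁻¹' (tsupport h + closedBall (-x₀) 1)
  have hS : IsCompact S := (isClosedEmbedding_smul_left hu).isCompact_preimage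
    (IsCompact.add hs (isCompact_closedBall (-x₀) 1))
  have hray (x : ℝ × ℝ) : Continuous fun t : ℝ => x + t • u := by fun_prop
  show HasFDerivAt (fun x => ∫ t in Ioi (0 : ℝ), h (x + t • u)) _ x₀
  refine hasFDerivAt_integral_of_dominated_of_fderiv_le (closedBall_mem_nhds x₀ one_pos)
    (𝕜 := ℝ) (μ := volume.restrict (Ioi 0)) (F := fun x t => h (x + t • u))
    (F' := fun x t => fderiv ℝ h (x + t • u)) (bound := S.indicator fun _ => C) ?_ ?_ ?_ ?_ ?_ ?_
  · exact .of_forall fun x => (hc.continuous.comp (hray x)).aestronglyMeasurable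
  · exact integrableOn_Ioi_comp_add_smul hc.continuous hs hu x₀
  · exact (hfderiv.comp (hray x₀)).aestronglyMeasurable
  · refine .of_forall fun t x hx => ?_
    by_cases ht : t ∈ S
    · simpa [indicator_of_mem ht] using hC (x + t • u)
    · have : x + t • u ∉ tsupport (fderiv ℝ h) := fun hmem =>
        ht ⟨_, tsupport_fderiv_subset ℝ hmem, -x, by simpa [dist_comm] using hx, by simp⟩
      simp [indicator_of_notMem ht, image_eq_zero_of_notMem_tsupport this]
  · exact (integrable_indicator_iff hS.measurableSet).2 (integrableOn_const hS.measure_ne_top)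
      |>.restrict
  · exact .of_forall fun t x _ => (hdiff _).hasFDerivAt.comp x
      ((hasFDerivAt_id x).add_const (t • u))

lemma fderiv_Xbeam_apply (hu : u ≠ 0) (hc : ContDiff ℝ 1 h) (hs : HasCompactSupport h)
    (x w : ℝ × ℝ) : fderiv ℝ (Xbeam u h) x w = Xbeam u (fun y => fderiv ℝ h y w) x := by
  rw [(hasFDerivAt_Xbeam hu hc hs x).fderiv, ContinuousLinearMap.integral_apply
    (integrableOn_Ioi_comp_add_smul (hc.continuous_fderiv one_ne_zero) (hs.fderiv (𝕜 := ℝ)) hu x)]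
  rfl

lemma Xbeam_fderiv_apply_self (hu : u ≠ 0) (hc : ContDiff ℝ 1 h) (hs : HasCompactSupport h)
    (x : ℝ × ℝ) : Xbeam u (fun y => fderiv ℝ h y u) x = -h x := by
  have hderiv (t : ℝ) : HasDerivAt (fun s : ℝ => h (x + s • u)) (fderiv ℝ h (x + t • u) u) t :=
    (hc.differentiable one_ne_zero _).hasFDerivAt.comp_hasDerivAt t
      (((hasDerivAt_id t).smul_const u).const_add x |>.congr_deriv (one_smul ℝ u))
  have hray : Continuous fun s : ℝ => h (x + s • u) := hc.continuous.comp (by fun_prop)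
  have hvanish : Tendsto (fun s : ℝ => h (x + s • u)) atTop (𝓝 0) :=
    (hs.comp_add_smul hu x).is_zero_at_infty.mono_left atTop_le_cocompact
  simpa [Xbeam] using integral_Ioi_of_hasDerivAt_of_tendsto hray.continuousWithinAt
    (fun t _ => hderiv t)
    (integrableOn_Ioi_comp_add_smul ((hc.continuous_fderiv one_ne_zero).clm_apply
      continuous_const) (hs.fderiv_apply ℝ u) hu x) hvanish

lemma fderiv_Xbeam_apply_self (hu : u ≠ 0) (hc : ContDiff ℝ 1 h) (hs : HasCompactSupport h)
    (x : ℝ × ℝ) : fderiv ℝ (Xbeam u h) x u = -h x := by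
  rw [fderiv_Xbeam_apply hu hc hs, Xbeam_fderiv_apply_self hu hc hs]

end BeamTransform

lemma IsC2c.mul_const_add_mul_const {f₁ f₂ : ℝ × ℝ → ℝ} (hf₁ : IsC2c f₁) (hf₂ : IsC2c f₂)
    (a b : ℝ) : IsC2c fun y => f₁ y * a + f₂ y * b :=
  ⟨(hf₁.1.mul contDiff_const).add (hf₂.1.mul contDiff_const),
    hf₁.2.mul_right.add hf₂.2.mul_right⟩

lemma fderiv_apply_comm_of_Xbeam_eq {u v : ℝ × ℝ} (hu : u ≠ 0) (hv : v ≠ 0)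
    {a b : ℝ × ℝ → ℝ} (ha : IsC2c a) (hb : IsC2c b) (hab : Xbeam u a = Xbeam v b)
    (x : ℝ × ℝ) : fderiv ℝ a x v = fderiv ℝ b x u := by
  obtain ⟨ha₂, has⟩ := ha
  obtain ⟨hb₂, hbs⟩ := hb
  have ha₁ : ContDiff ℝ 1 a := ha₂.of_le one_le_two
  have hb₁ : ContDiff ℝ 1 b := hb₂.of_le one_le_two
  set a' : ℝ × ℝ → ℝ := fun y => fderiv ℝ a y v
  have ha'₁ : ContDiff ℝ 1 a' := (ha₂.fderiv_right le_rfl).clm_apply contDiff_const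
  have ha's : HasCompactSupport a' := has.fderiv_apply ℝ v
  -- differentiate `X_u a = X_v b` along `v`, where `D_v X_v b = -b`
  have hXa' : Xbeam u a' = fun y => -b y := funext fun y => by
    rw [← fderiv_Xbeam_apply hu ha₁ has, hab, fderiv_Xbeam_apply_self hv hb₁ hbs]
  calc fderiv ℝ a x v = -Xbeam u (fun y => fderiv ℝ a' y u) x := by
        rw [Xbeam_fderiv_apply_self hu ha'₁ ha's, neg_neg]
    _ = -fderiv ℝ (Xbeam u a') x u := by rw [fderiv_Xbeam_apply hu ha'₁ ha's]
    _ = fderiv ℝ b x u := by rw [hXa', fderiv_fun_neg]; simp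

lemma sub_fderiv_dot_perp_eq_det_mul_divf {f₁ f₂ : ℝ × ℝ → ℝ} {x : ℝ × ℝ}
    (hf₁ : DifferentiableAt ℝ f₁ x) (hf₂ : DifferentiableAt ℝ f₂ x) (u v : ℝ × ℝ) :
    fderiv ℝ (fun y => f₁ y * (perp2 u).1 + f₂ y * (perp2 u).2) x v
      - fderiv ℝ (fun y => f₁ y * (perp2 v).1 + f₂ y * (perp2 v).2) x u
      = (u.1 * v.2 - u.2 * v.1) * divf f₁ f₂ x := by
  have hcomb (a w : ℝ × ℝ) : fderiv ℝ (fun y => f₁ y * a.1 + f₂ y * a.2) x w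
      = fderiv ℝ f₁ x w * a.1 + fderiv ℝ f₂ x w * a.2 := by
    rw [fderiv_fun_add (hf₁.mul_const _) (hf₂.mul_const _), fderiv_mul_const hf₁,
      fderiv_mul_const hf₂]
    simp [mul_comm]
  have hexpand (L : ℝ × ℝ →L[ℝ] ℝ) (w : ℝ × ℝ) : L w = w.1 * L (1, 0) + w.2 * L (0, 1) := by
    calc L w = L (w.1 • ((1 : ℝ), (0 : ℝ)) + w.2 • ((0 : ℝ), (1 : ℝ))) := by
          congr 1; ext <;> simp
      _ = w.1 * L (1, 0) + w.2 * L (0, 1) := by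
          rw [map_add, map_smul, map_smul, smul_eq_mul, smul_eq_mul]
  rw [hcomb, hcomb, hexpand (fderiv ℝ f₁ x) u, hexpand (fderiv ℝ f₂ x) u,
    hexpand (fderiv ℝ f₁ x) v, hexpand (fderiv ℝ f₂ x) v, divf, perp2, perp2]
  ring

lemma det_ne_zero_of_linearIndependent {u v : ℝ × ℝ} (huv : LinearIndependent ℝ ![u, v]) :
    u.1 * v.2 - u.2 * v.1 ≠ 0 := by
  intro hdet
  have hv : v ≠ 0 := by simpa using huv.ne_zero 1
  rw [LinearIndependent.pair_iff] at huv
  obtain ⟨hv₂, -⟩ := huv v.2 (-u.2) (by ext <;> simp <;> linarith)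
  obtain ⟨hv₁, -⟩ := huv (-v.1) u.1 (by ext <;> simp <;> linarith)
  exact hv (Prod.ext (neg_eq_zero.1 hv₁) hv₂)

lemma eq_zero_of_divf_eq_zero_of_curlf_eq_zero {f₁ f₂ : ℝ × ℝ → ℝ} (hd₁ : Differentiable ℝ f₁)
    (hd₂ : Differentiable ℝ f₂) (hs₁ : HasCompactSupport f₁) (hs₂ : HasCompactSupport f₂)
    (hdiv : ∀ x, divf f₁ f₂ x = 0) (hcurl : ∀ x, curlf f₁ f₂ x = 0) (x : ℝ × ℝ) :
    f₁ x = 0 ∧ f₂ x = 0 := by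
  set e := Complex.equivRealProdCLM
  -- `f₁ - i f₂`: div and curl vanishing are exactly its Cauchy–Riemann equations
  set g : ℂ → ℂ := fun z => e.symm (f₁ (e z), -f₂ (e z))
  have hg : Differentiable ℂ g := by
    intro z
    have hF : HasFDerivAt g ((e.symm : ℝ × ℝ →L[ℝ] ℂ).comp
        (((fderiv ℝ f₁ (e z)).prod (-fderiv ℝ f₂ (e z))).comp e)) z :=
      e.symm.hasFDerivAt.comp z
        (((hd₁ _).hasFDerivAt.prodMk (hd₂ _).hasFDerivAt.neg).comp z e.hasFDerivAt)
    refine differentiableAt_complex_iff_differentiableAt_real.2 ⟨hF.differentiableAt, ?_⟩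
    have h₁ := hdiv (z.re, z.im)
    have h₂ := hcurl (z.re, z.im)
    simp only [divf, curlf] at h₁ h₂
    rw [hF.fderiv]
    apply Complex.ext <;> simp [e, Complex.equivRealProdCLM_symm_apply] <;> linarith
  have hgs : HasCompactSupport g :=
    (hs₁.comp₂_left hs₂ (m := fun a b => e.symm (a, -b)) (by simp)).comp_homeomorph
      e.toHomeomorph
  have hg0 : g = Function.const ℂ 0 := hg.eq_const_of_tendsto_cocompact hgs.is_zero_at_infty
  have hx : e.symm (f₁ x, -f₂ x) = e.symm 0 := by simpa [g] using congr_fun hg0 (e.symm x)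
  simpa using e.symm.injective hx

theorem stmt5_general (u v : ℝ × ℝ)
    (huv : LinearIndependent ℝ ![u, v])
    (f₁ f₂ : ℝ × ℝ → ℝ) (hf₁ : IsC2c f₁) (hf₂ : IsC2c f₂)
    (hcurl : ∀ x, curlf f₁ f₂ x = 0)
    (hT : ∀ x, VlineT u v f₁ f₂ x = 0) :
    ∀ x, f₁ x = 0 ∧ f₂ x = 0 := by
  have hd₁ : Differentiable ℝ f₁ := hf₁.1.differentiable two_ne_zero
  have hd₂ : Differentiable ℝ f₂ := hf₂.1.differentiable two_ne_zero
  have hX : Xbeam u (fun y => f₁ y * (perp2 u).1 + f₂ y * (perp2 u).2)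
      = Xbeam v (fun y => f₁ y * (perp2 v).1 + f₂ y * (perp2 v).2) :=
    funext fun x => neg_add_eq_zero.1 (hT x)
  have hdiv (x : ℝ × ℝ) : divf f₁ f₂ x = 0 := by
    have hcomm := fderiv_apply_comm_of_Xbeam_eq (by simpa using huv.ne_zero 0)
      (by simpa using huv.ne_zero 1) (hf₁.mul_const_add_mul_const hf₂ _ _)
      (hf₁.mul_const_add_mul_const hf₂ _ _) hX x
    have hdet := sub_fderiv_dot_perp_eq_det_mul_divf (hd₁ x) (hd₂ x) u v
    rw [hcomm, sub_self, eq_comm, mul_eq_zero] at hdet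
    exact hdet.resolve_left (det_ne_zero_of_linearIndependent huv)
  exact eq_zero_of_divf_eq_zero_of_curlf_eq_zero hd₁ hd₂ hf₁.2 hf₂.2 hdiv hcurl

/-- `T` is injective on compactly supported curl-free fields. -/
theorem stmt5 (u v : ℝ × ℝ) (hu : u.1 ^ 2 + u.2 ^ 2 = 1) (hv : v.1 ^ 2 + v.2 ^ 2 = 1)
    (huv : LinearIndependent ℝ ![u, v])
    (f₁ f₂ : ℝ × ℝ → ℝ) (hf₁ : IsC2c f₁) (hf₂ : IsC2c f₂)
    (hcurl : ∀ x, curlf f₁ f₂ x = 0)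
    (hT : ∀ x, VlineT u v f₁ f₂ x = 0) :
    ∀ x, f₁ x = 0 ∧ f₂ x = 0 :=
  stmt5_general u v huv f₁ f₂ hf₁ hf₂ hcurl hT
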